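/- Monotone decrease of the training direction (Remark A.1, monotonicity part): If K : Matrix (Fin n) (Fin n) ℝ is positive semidefinite (K.PosSemidef), then for every v : Fin n → ℝ the function t ↦ ‖(exp (−t • K)).mulVec v‖ (Euclidean norm) is antitone on the set [0, ∞) (Set.Ici 0); i.e., the norm of the residual f t − Y, and hence of the training direction, never increases along kernel gradient flow. -/

import Mathlib

/-- The matrix exponential (`Matrix.exp` in later Mathlib): the exponential in the
topological algebra of square matrices. -/
noncomputable def Matrix.exp (𝕂 : Type*) {n : ℕ} [Field 𝕂] [TopologicalSpace 𝕂]
    [IsTopologicalRing 𝕂] (A : Matrix (Fin n) (Fin n) 𝕂) : Matrix (Fin n) (Fin n) 𝕂 :=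
  NormedSpace.exp A

open Matrix

/-- The Euclidean (`ℓ²`) norm of a vector in `Fin n → ℝ`. -/
noncomputable def euclNorm {n : ℕ} (v : Fin n → ℝ) : ℝ :=
  ‖(WithLp.equiv 2 (Fin n → ℝ)).symm v‖

/-!
Along `w t = exp (-t K) v` we have `w' = -K w`, so `d/dt ‖w‖² = -2 ⟪w, K w⟫ ≤ 0` when `K` is
positive semidefinite.
-/

open scoped InnerProductSpace

theorem antitone_norm_of_inner_deriv_nonpos {E : Type*} [NormedAddCommGroup E]
    [InnerProductSpace ℝ E] {f f' : ℝ → E} (hf : ∀ t, HasDerivAt f (f' t) t)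
    (hf' : ∀ t, ⟪f t, f' t⟫_ℝ ≤ 0) : Antitone (‖f ·‖) := by
  have hsq : Antitone (‖f ·‖ ^ 2) :=
    antitone_of_hasDerivAt_nonpos (fun t => (hf t).norm_sq)
      fun t => mul_nonpos_of_nonneg_of_nonpos zero_le_two (hf' t)
  exact fun s t hst =>
    (pow_le_pow_iff_left₀ (norm_nonneg _) (norm_nonneg _) two_ne_zero).1 (hsq hst)

theorem hasDerivAt_exp_neg_smul {𝔸 : Type*} [NormedRing 𝔸] [NormedAlgebra ℝ 𝔸] [CompleteSpace 𝔸]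
    (x : 𝔸) (t : ℝ) :
    HasDerivAt (fun u : ℝ => NormedSpace.exp (-u • x)) (-(x * NormedSpace.exp (-t • x))) t := by
  simpa [Function.comp_def] using (hasDerivAt_exp_smul_const' x (-t)).scomp t (hasDerivAt_neg t)

section Matrix

variable {m : Type*} [Fintype m] [DecidableEq m]

-- Any algebra norm will do here, since `NormedSpace.exp` does not depend on the norm.
attribute [local instance] Matrix.linftyOpNormedRing Matrix.linftyOpNormedAlgebra

theorem Matrix.hasDerivAt_toLp_exp_neg_smul_mulVec (K : Matrix m m ℝ) (v : m → ℝ) (t : ℝ) :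
    HasDerivAt (fun u : ℝ => (WithLp.toLp 2 (NormedSpace.exp (-u • K) *ᵥ v) : EuclideanSpace ℝ m))
      (-(WithLp.toLp 2 (K *ᵥ (NormedSpace.exp (-t • K) *ᵥ v)) : EuclideanSpace ℝ m)) t := by
  let L : Matrix m m ℝ →L[ℝ] EuclideanSpace ℝ m :=
    (EuclideanSpace.equiv m ℝ).symm.toContinuousLinearMap ∘L
      LinearMap.toContinuousLinearMap (LinearMap.applyₗ v ∘ₗ Matrix.toLin'.toLinearMap)
  refine (L.hasFDerivAt.comp_hasDerivAt t (hasDerivAt_exp_neg_smul K t)).congr_deriv ?_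
  change WithLp.toLp 2 (-(K * NormedSpace.exp (-t • K)) *ᵥ v) = _
  rw [Matrix.neg_mulVec, ← Matrix.mulVec_mulVec, WithLp.toLp_neg]

end Matrix

theorem Matrix.PosSemidef.inner_toLp_mulVec_nonneg {m : Type*} [Fintype m]
    {K : Matrix m m ℝ} (hK : K.PosSemidef) (w : m → ℝ) :
    0 ≤ ⟪WithLp.toLp 2 w, WithLp.toLp 2 (K *ᵥ w)⟫_ℝ := by
  simpa [EuclideanSpace.inner_toLp_toLp, dotProduct_comm] using hK.dotProduct_mulVec_nonneg w

/-- Monotone decrease of the training direction (Remark A.1, monotonicity part):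
for positive semidefinite `K`, the Euclidean norm of the residual
`exp (−t • K) v` is antitone on `[0, ∞)`. -/
theorem residual_norm_antitone (n : ℕ) (K : Matrix (Fin n) (Fin n) ℝ)
    (hK : K.PosSemidef) (v : Fin n → ℝ) :
    AntitoneOn (fun t : ℝ => euclNorm ((Matrix.exp ℝ (-t • K)).mulVec v)) (Set.Ici 0) := by
  have h := antitone_norm_of_inner_deriv_nonpos (K.hasDerivAt_toLp_exp_neg_smul_mulVec v)
    fun t => by
      rw [inner_neg_right, neg_nonpos]
      exact hK.inner_toLp_mulVec_nonneg _
  exact h.antitoneOn _
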